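/- Let X be a set and Y a proper subset of X with at least two elements. Let 𝓓̃ denote the smallest equivalence relation on T(X,Y) containing both 𝓛̃ and 𝓡̃ (their join). Then 𝓓̃ has exactly two classes: the set of constant maps (elements α with |α(X)| = 1) and its complement. That is, for α, β ∈ T(X,Y), α 𝓓̃ β if and only if (|α(X)| = 1 and |β(X)| = 1) or (|α(X)| > 1 and |β(X)| > 1). -/

import Mathlib

/-!
Being constant is invariant under `𝓛̃` and `𝓡̃`: a constant map is fixed on the left by the
constant idempotent at its value, and on the right by every constant idempotent, whereas a
non-constant map is fixed on the right by no constant idempotent. Conversely, all constant maps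
are `𝓡̃`-related. A non-constant `α` has the same range as, hence is `𝓛̃`-related to, a map `γ`
whose fibre over `γ x₀` is `{x₀}` for a fixed `x₀ ∉ Y`; such a `γ` admits no right identity in
`T(X,Y)`, so any two of them are `𝓡̃`-related.
-/

/-- The relation `𝓛̃` on `T(X,Y)`, with membership in `T(X,Y)` built in
(multiplication `α·β := β ∘ α`, so `α·η = η ∘ α`). -/
def LtildeT {X : Type*} (Y : Set X) (α β : X → X) : Prop :=
  Set.range α ⊆ Y ∧ Set.range β ⊆ Y ∧
    ∀ η : X → X, Set.range η ⊆ Y → η ∘ η = η → ((η ∘ α = α) ↔ (η ∘ β = β))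

/-- The relation `𝓡̃` on `T(X,Y)`, with membership in `T(X,Y)` built in
(`η·α = α ∘ η`). -/
def RtildeT {X : Type*} (Y : Set X) (α β : X → X) : Prop :=
  Set.range α ⊆ Y ∧ Set.range β ⊆ Y ∧
    ∀ η : X → X, Set.range η ⊆ Y → η ∘ η = η → ((α ∘ η = α) ↔ (β ∘ η = β))

open Set

section RangeCardinal

variable {ι Z : Type*}

lemma mk_range_eq_one_iff [Nonempty ι] {α : ι → Z} :
    Cardinal.mk (range α) = 1 ↔ (range α).Subsingleton := by
  rw [Cardinal.eq_one_iff_unique, subsingleton_coe]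
  exact and_iff_left (range_nonempty α).to_subtype

lemma one_lt_mk_range_iff {α : ι → Z} :
    1 < Cardinal.mk (range α) ↔ (range α).Nontrivial := by
  rw [Cardinal.one_lt_iff_nontrivial, nontrivial_coe_sort]

lemma exists_range_eq_and_unique_preimage {α : ι → Z} (hα : (range α).Nontrivial) (i₀ : ι) :
    ∃ γ : ι → Z, range γ = range α ∧ ∀ i, γ i = γ i₀ → i = i₀ := by
  classical
  obtain ⟨v, hv, hvu⟩ := hα.exists_ne (α i₀)
  let γ : ι → Z := fun i => if i = i₀ then α i₀ else if α i = α i₀ then v else α i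
  have hγ_ne : ∀ i, i ≠ i₀ → γ i ≠ α i₀ := by
    intro i hi
    by_cases h : α i = α i₀ <;> simp [γ, hi, h, hvu]
  refine ⟨γ, (range_subset_iff.2 fun i => ?_).antisymm (range_subset_iff.2 fun i => ?_), ?_⟩
  · by_cases hi : i = i₀
    · simp [γ, hi]
    by_cases h : α i = α i₀ <;> simp [γ, hi, h, hv]
  · by_cases h : α i = α i₀
    · exact ⟨i₀, by simp [γ, h]⟩
    · exact ⟨i, by simp [γ, h, show i ≠ i₀ by rintro rfl; exact h rfl]⟩
  · intro i hi
    by_contra hne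
    exact hγ_ne i hne (by simpa [γ] using hi)

end RangeCardinal

section Tilde

variable {X : Type*} {Y : Set X} {α β : X → X}

lemma comp_const_eq_self_iff (y : X) : α ∘ (fun _ => y) = α ↔ (range α).Subsingleton := by
  constructor
  · rintro h _ ⟨x, rfl⟩ _ ⟨x', rfl⟩
    exact (congrFun h x).symm.trans (congrFun h x')
  · intro h
    funext x
    exact h ⟨y, rfl⟩ ⟨x, rfl⟩

lemma LtildeT.symm (h : LtildeT Y α β) : LtildeT Y β α :=
  ⟨h.2.1, h.1, fun η hη hηη => (h.2.2 η hη hηη).symm⟩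

lemma LtildeT.subsingleton_range (h : LtildeT Y α β) (hα : (range α).Subsingleton) :
    (range β).Subsingleton := by
  rintro _ ⟨x, rfl⟩ _ ⟨x', rfl⟩
  have hβ : (fun _ => α x) ∘ β = β :=
    (h.2.2 _ (range_subset_iff.2 fun _ => h.1 ⟨x, rfl⟩) rfl).1
      (funext fun z => hα ⟨x, rfl⟩ ⟨z, rfl⟩)
  exact (congrFun hβ x).symm.trans (congrFun hβ x')

lemma RtildeT.subsingleton_range_iff {y : X} (hy : y ∈ Y) (h : RtildeT Y α β) :
    (range α).Subsingleton ↔ (range β).Subsingleton := by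
  rw [← comp_const_eq_self_iff y, ← comp_const_eq_self_iff y]
  exact h.2.2 _ (range_subset_iff.2 fun _ => hy) rfl

lemma subsingleton_range_iff_of_eqvGen (hY : Y.Nonempty)
    (h : Relation.EqvGen (fun a b => LtildeT Y a b ∨ RtildeT Y a b) α β) :
    (range α).Subsingleton ↔ (range β).Subsingleton := by
  induction h with
  | rel _ _ hr =>
    rcases hr with hL | hR
    · exact ⟨hL.subsingleton_range, hL.symm.subsingleton_range⟩
    · exact hR.subsingleton_range_iff hY.some_mem
  | refl _ => rfl
  | symm _ _ _ ih => exact ih.symm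
  | trans _ _ _ _ _ ih₁ ih₂ => exact ih₁.trans ih₂

lemma ltildeT_of_range_eq (hα : range α ⊆ Y) (hβ : range β ⊆ Y) (h : range α = range β) :
    LtildeT Y α β := by
  have fixes_iff : ∀ η γ : X → X, η ∘ γ = γ ↔ ∀ z ∈ range γ, η z = z := fun η γ =>
    ⟨fun hη _ ⟨x, hx⟩ => hx ▸ congrFun hη x, fun hη => funext fun x => hη _ ⟨x, rfl⟩⟩
  exact ⟨hα, hβ, fun η _ _ => by rw [fixes_iff, fixes_iff, h]⟩

lemma rtildeT_of_subsingleton_range (hα : range α ⊆ Y) (hβ : range β ⊆ Y)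
    (hα₁ : (range α).Subsingleton) (hβ₁ : (range β).Subsingleton) : RtildeT Y α β :=
  ⟨hα, hβ, fun η _ _ =>
    iff_of_true (funext fun x => hα₁ ⟨η x, rfl⟩ ⟨x, rfl⟩)
      (funext fun x => hβ₁ ⟨η x, rfl⟩ ⟨x, rfl⟩)⟩

lemma comp_ne_self_of_unique_preimage {x₀ : X} (hx₀ : x₀ ∉ Y)
    (hα : ∀ x, α x = α x₀ → x = x₀) {η : X → X} (hη : range η ⊆ Y) : α ∘ η ≠ α := fun h =>
  hx₀ (hα _ (congrFun h x₀) ▸ hη ⟨x₀, rfl⟩)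

lemma rtildeT_of_unique_preimage {x₀ : X} (hx₀ : x₀ ∉ Y) (hα : range α ⊆ Y)
    (hβ : range β ⊆ Y) (hα₀ : ∀ x, α x = α x₀ → x = x₀) (hβ₀ : ∀ x, β x = β x₀ → x = x₀) :
    RtildeT Y α β :=
  ⟨hα, hβ, fun _ hη _ =>
    iff_of_false (comp_ne_self_of_unique_preimage hx₀ hα₀ hη)
      (comp_ne_self_of_unique_preimage hx₀ hβ₀ hη)⟩

lemma eqvGen_of_nontrivial_range {x₀ : X} (hx₀ : x₀ ∉ Y) (hα : range α ⊆ Y)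
    (hβ : range β ⊆ Y) (hα₂ : (range α).Nontrivial) (hβ₂ : (range β).Nontrivial) :
    Relation.EqvGen (fun a b => LtildeT Y a b ∨ RtildeT Y a b) α β := by
  obtain ⟨γ, hγα, hγ₀⟩ := exists_range_eq_and_unique_preimage hα₂ x₀
  obtain ⟨δ, hδβ, hδ₀⟩ := exists_range_eq_and_unique_preimage hβ₂ x₀
  have hγ : range γ ⊆ Y := hγα ▸ hα
  have hδ : range δ ⊆ Y := hδβ ▸ hβ
  refine .trans _ γ _ (.rel _ _ (.inl (ltildeT_of_range_eq hα hγ hγα.symm)))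
    (.trans _ δ _ (.rel _ _ (.inr (rtildeT_of_unique_preimage hx₀ hγ hδ hγ₀ hδ₀))) ?_)
  exact .rel _ _ (.inl (ltildeT_of_range_eq hδ hβ hδβ))
end Tilde

theorem Dtilde_in_TXY_general {X : Type*} (Y : Set X)
    (hYX : Y ≠ Set.univ) (α β : X → X)
    (hα : Set.range α ⊆ Y) (hβ : Set.range β ⊆ Y) :
    Relation.EqvGen (fun a b => LtildeT Y a b ∨ RtildeT Y a b) α β ↔
    ((Cardinal.mk (Set.range α) = 1 ∧ Cardinal.mk (Set.range β) = 1) ∨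
      (1 < Cardinal.mk (Set.range α) ∧ 1 < Cardinal.mk (Set.range β))) := by
  obtain ⟨x₀, hx₀⟩ := (ne_univ_iff_exists_notMem Y).1 hYX
  have : Nonempty X := ⟨x₀⟩
  rw [mk_range_eq_one_iff, mk_range_eq_one_iff, one_lt_mk_range_iff, one_lt_mk_range_iff,
    ← not_subsingleton_iff, ← not_subsingleton_iff]
  constructor
  · intro h
    have := subsingleton_range_iff_of_eqvGen ⟨α x₀, hα ⟨x₀, rfl⟩⟩ h
    tauto
  · rintro (⟨hα₁, hβ₁⟩ | ⟨hα₂, hβ₂⟩)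
    · exact .rel _ _ (.inr (rtildeT_of_subsingleton_range hα hβ hα₁ hβ₁))
    · exact eqvGen_of_nontrivial_range hx₀ hα hβ (not_subsingleton_iff.1 hα₂)
        (not_subsingleton_iff.1 hβ₂)

/-- Let `X` be a set and `Y` a proper subset of `X` with at least two
elements, and let `𝓓̃` be the join of `𝓛̃` and `𝓡̃` (the equivalence closure of their
union). Then `𝓓̃` has exactly two classes: the constant maps (`|α(X)| = 1`) and their
complement. -/
theorem Dtilde_in_TXY {X : Type*} (Y : Set X) (hY : Y.Nontrivial)
    (hYX : Y ≠ Set.univ) (α β : X → X)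
    (hα : Set.range α ⊆ Y) (hβ : Set.range β ⊆ Y) :
    Relation.EqvGen (fun a b => LtildeT Y a b ∨ RtildeT Y a b) α β ↔
    ((Cardinal.mk (Set.range α) = 1 ∧ Cardinal.mk (Set.range β) = 1) ∨
      (1 < Cardinal.mk (Set.range α) ∧ 1 < Cardinal.mk (Set.range β))) :=
  Dtilde_in_TXY_general Y hYX α β hα hβ
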